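/- Consider the chain complex 0 → ℤ →^{Φ_2} ℤ^3 →^{Φ_1} ℤ^8 → 0 where Φ_2 = 0 and Φ_1 sends the standard basis vectors β_0, β_1, β_2 of ℤ^3 to e_3 + e_4 − e_1 − e_2, e_5 + e_6 − e_3 − e_4, and e_7 + e_8 − e_1 − e_2 respectively, with e_1,...,e_8 the standard basis of ℤ^8. Then H_2 ≅ ℤ, H_1 = 0, and H_0 = coker(Φ_1) ≅ ℤ^5. (Bredon homology of p2.) -/
import Mathlib


open LinearMap Submodule

noncomputable def Phi2 : ℤ →ₗ[ℤ] (Fin 3 → ℤ) := 0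

noncomputable def Phi1 : (Fin 3 → ℤ) →ₗ[ℤ] (Fin 8 → ℤ) :=
  Matrix.toLin' !![-1, 0, -1; -1, 0, -1; 1, -1, 0; 1, -1, 0; 0, 1, 0; 0, 1, 0; 0, 0, 1; 0, 0, 1]

abbrev H1 : Type := ↥(ker Phi1) ⧸ (Submodule.comap (ker Phi1).subtype (range Phi2))

abbrev H0 : Type := (Fin 8 → ℤ) ⧸ (range Phi1)


open Matrix in
@[simp] lemma cons_val_five' {α : Type*} {m : ℕ} (x : α) (u : Fin m.succ.succ.succ.succ.succ → α) :
    vecCons x u 5 = vecHead (vecTail (vecTail (vecTail (vecTail u)))) := rfl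
open Matrix in
@[simp] lemma cons_val_six' {α : Type*} {m : ℕ} (x : α) (u : Fin m.succ.succ.succ.succ.succ.succ → α) :
    vecCons x u 6 = vecHead (vecTail (vecTail (vecTail (vecTail (vecTail u))))) := rfl
open Matrix in
@[simp] lemma cons_val_seven' {α : Type*} {m : ℕ} (x : α) (u : Fin m.succ.succ.succ.succ.succ.succ.succ → α) :
    vecCons x u 7 = vecHead (vecTail (vecTail (vecTail (vecTail (vecTail (vecTail u)))))) := rfl


noncomputable def Psi : (Fin 8 → ℤ) →ₗ[ℤ] (Fin 5 → ℤ) :=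
  Matrix.toLin' !![1,0,0,1,0,1,0,1; 0,1,0,1,0,1,0,1; 0,0,1,-1,0,0,0,0;
    0,0,0,0,1,-1,0,0; 0,0,0,0,0,0,1,-1]

lemma Phi1_apply (x : Fin 3 → ℤ) : Phi1 x =
    ![-x 0 - x 2, -x 0 - x 2, x 0 - x 1, x 0 - x 1, x 1, x 1, x 2, x 2] := by
  funext i
  fin_cases i <;>
    simp [Phi1, Matrix.toLin'_apply, Matrix.mulVec, dotProduct, Fin.sum_univ_three, Matrix.vecHead, Matrix.vecTail] <;>
    ring

lemma Psi_apply (x : Fin 8 → ℤ) : Psi x =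
    ![x 0 + x 3 + x 5 + x 7, x 1 + x 3 + x 5 + x 7, x 2 - x 3, x 4 - x 5, x 6 - x 7] := by
  funext i
  fin_cases i <;>
    simp [Psi, Matrix.toLin'_apply, Matrix.mulVec, dotProduct, Fin.sum_univ_eight, Matrix.vecHead, Matrix.vecTail] <;>
    ring

lemma ker_Psi : range Phi1 = ker Psi := by
  apply le_antisymm
  · rintro _ ⟨y, rfl⟩
    simp only [mem_ker, Phi1_apply, Psi_apply]
    funext i
    fin_cases i <;> simp <;> ring
  · intro x hx
    simp only [mem_ker] at hx
    rw [Psi_apply] at hx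
    have h0 := congrFun hx 0
    have h1 := congrFun hx 1
    have h2 := congrFun hx 2
    have h3 := congrFun hx 3
    have h4 := congrFun hx 4
    simp [Matrix.cons_val_zero, Matrix.cons_val_one] at h0 h1 h2 h3 h4
    refine ⟨![x 2 + x 4, x 4, x 6], ?_⟩
    rw [Phi1_apply]
    funext i
    fin_cases i <;> simp <;> omega

lemma Psi_surj : Function.Surjective Psi := by
  intro y
  refine ⟨![y 0, y 1, y 2, 0, y 3, 0, y 4, 0], ?_⟩
  rw [Psi_apply]
  funext i
  fin_cases i <;> simp

theorem stmt_8 :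
    Nonempty (↥(ker Phi2) ≃ₗ[ℤ] ℤ) ∧
    Subsingleton H1 ∧
    Nonempty (H0 ≃ₗ[ℤ] (Fin 5 → ℤ)) := by
  refine ⟨⟨?_⟩, ?_, ⟨?_⟩⟩
  · have h : ker Phi2 = ⊤ := by simp [Phi2]
    exact (LinearEquiv.ofEq _ _ h).trans (Submodule.topEquiv)
  · have h : ker Phi1 = ⊥ := by
      rw [eq_bot_iff]
      intro x hx
      simp only [mem_ker] at hx
      rw [Phi1_apply] at hx
      have h0 := congrFun hx 0
      have h4 := congrFun hx 4
      have h6 := congrFun hx 6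
      simp at h0 h4 h6
      simp only [Submodule.mem_bot]
      funext i
      fin_cases i <;> simp <;> omega
    haveI : Subsingleton ↥(ker Phi1) := by rw [h]; infer_instance
    refine ⟨fun a b => ?_⟩
    obtain ⟨x, rfl⟩ := Submodule.Quotient.mk_surjective _ a
    obtain ⟨y, rfl⟩ := Submodule.Quotient.mk_surjective _ b
    congr 1
    exact Subsingleton.elim x y
  · exact (Submodule.quotEquivOfEq _ _ ker_Psi).trans
      (Psi.quotKerEquivOfSurjective Psi_surj)
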